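/- arXiv:2409.00443 — 10 statements merged into one kernel-verified Lean document; each statement's English description precedes it below -/
import Mathlib

section
/- Let A and B be k-vector spaces equipped with the bilinear maps μ, ν, ▷, ◁, ⇀, ↼, θ below. The multiplication on A⊕B defined by (a,x)·(b,y) = (a·_A b + a↼y + x⇀b, x·_B y + a▷y + x◁b + θ(a,b)) is associative if and only if: ν is associative; (A,⇀,↼) is a bimodule over (B,ν) (i.e., (x·_B y)⇀a = x⇀(y⇀a), a↼(x·_B y) = (a↼x)↼y, and (x⇀a)↼y = x⇀(a↼y)); and for all a,b,c ∈ A and x,y ∈ B the following eleven identities hold: (1) a·_A(b·_A c) + a↼θ(b,c) = (a·_A b)·_A c + θ(a,b)⇀c; (2) (a·_A b)▷x + θ(a,b)·_B x = a▷(b▷x) + θ(a, b↼x); (3) x◁(a·_A b) + x·_B θ(a,b) = (x◁a)◁b + θ(x⇀a, b); (4) a▷(x◁b) + θ(a, x⇀b) = (a▷x)◁b + θ(a↼x, b); (5) a▷(x·_B y) = (a▷x)·_B y + (a↼x)▷y; (6) (x·_B y)◁a = x·_B(y◁a) + x◁(y⇀a); (7) x◁(a↼y) + x·_B(a▷y)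 = (x⇀a)▷y + (x◁a)·_B y; (8) x⇀(a·_A b) = (x⇀a)·_A b + (x◁a)⇀b; (9) (a·_A b)↼x = a·_A(b↼x) + a↼(b▷x); (10) a↼(x◁b) + a·_A(x⇀b) = (a▷x)⇀b + (a↼x)·_A b; (11) θ(a, b·_A c) + a▷θ(b,c) = θ(a·_A b, c) + θ(a,b)◁c. -/
variable {k A B : Type*} [Field k] [AddCommGroup A] [Module k A] [AddCommGroup B] [Module k B]

/-- The multiplication on `A ⊕ B` determined by the data
`(μ, ν, ▷ = tr, ◁ = tl, ⇀ = hr, ↼ = hl, θ)`: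
`(a,x)·(b,y) = (a·_A b + a↼y + x⇀b, x·_B y + a▷y + x◁b + θ(a,b))`. -/
def qtMul (μ : A →ₗ[k] A →ₗ[k] A) (ν : B →ₗ[k] B →ₗ[k] B)
    (tr : A →ₗ[k] B →ₗ[k] B) (tl : B →ₗ[k] A →ₗ[k] B)
    (hr : B →ₗ[k] A →ₗ[k] A) (hl : A →ₗ[k] B →ₗ[k] A)
    (θ : A →ₗ[k] A →ₗ[k] B) (p q : A × B) : A × B :=
  (μ p.1 q.1 + hl p.1 q.2 + hr p.2 q.1,
   ν p.2 q.2 + tr p.1 q.2 + tl p.2 q.1 + θ p.1 q.1)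

/-- the multiplication on `A ⊕ B` is associative iff `ν` is associative,
`(A, ⇀, ↼)` is a bimodule over `(B, ν)`, and the eleven compatibility identities hold. -/
theorem qtMul_assoc_iff
    (μ : A →ₗ[k] A →ₗ[k] A) (ν : B →ₗ[k] B →ₗ[k] B)
    (tr : A →ₗ[k] B →ₗ[k] B) (tl : B →ₗ[k] A →ₗ[k] B)
    (hr : B →ₗ[k] A →ₗ[k] A) (hl : A →ₗ[k] B →ₗ[k] A)
    (θ : A →ₗ[k] A →ₗ[k] B) :
    (∀ p q s : A × B,
        qtMul μ ν tr tl hr hl θ (qtMul μ ν tr tl hr hl θ p q) s =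
          qtMul μ ν tr tl hr hl θ p (qtMul μ ν tr tl hr hl θ q s)) ↔
    ((∀ x y z : B, ν (ν x y) z = ν x (ν y z)) ∧
     (∀ x y : B, ∀ a : A, hr (ν x y) a = hr x (hr y a)) ∧
     (∀ a : A, ∀ x y : B, hl a (ν x y) = hl (hl a x) y) ∧
     (∀ x : B, ∀ a : A, ∀ y : B, hl (hr x a) y = hr x (hl a y)) ∧
     (∀ a b c : A, μ a (μ b c) + hl a (θ b c) = μ (μ a b) c + hr (θ a b) c) ∧
     (∀ a b : A, ∀ x : B, tr (μ a b) x + ν (θ a b) x = tr a (tr b x) + θ a (hl b x)) ∧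
     (∀ x : B, ∀ a b : A, tl x (μ a b) + ν x (θ a b) = tl (tl x a) b + θ (hr x a) b) ∧
     (∀ a : A, ∀ x : B, ∀ b : A, tr a (tl x b) + θ a (hr x b) = tl (tr a x) b + θ (hl a x) b) ∧
     (∀ a : A, ∀ x y : B, tr a (ν x y) = ν (tr a x) y + tr (hl a x) y) ∧
     (∀ x y : B, ∀ a : A, tl (ν x y) a = ν x (tl y a) + tl x (hr y a)) ∧
     (∀ x : B, ∀ a : A, ∀ y : B, tl x (hl a y) + ν x (tr a y) = tr (hr x a) y + ν (tl x a) y) ∧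
     (∀ x : B, ∀ a b : A, hr x (μ a b) = μ (hr x a) b + hr (tl x a) b) ∧
     (∀ a b : A, ∀ x : B, hl (μ a b) x = μ a (hl b x) + hl a (tr b x)) ∧
     (∀ a : A, ∀ x : B, ∀ b : A, hl a (tl x b) + μ a (hr x b) = hr (tr a x) b + μ (hl a x) b) ∧
     (∀ a b c : A, θ a (μ b c) + tr a (θ b c) = θ (μ a b) c + tl (θ a b) c)) := by
  constructor
  · intro H
    refine ⟨?_, ?_, ?_, ?_, ?_, ?_, ?_, ?_, ?_, ?_, ?_, ?_, ?_, ?_, ?_⟩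
    · intro x y z
      have h := H ((0:A),x) (0,y) (0,z)
      simp [qtMul, Prod.ext_iff] at h
      linear_combination (norm := abel) h
    · intro x y a
      have h := H ((0:A),x) (0,y) (a,0)
      simp [qtMul, Prod.ext_iff] at h
      linear_combination (norm := abel) h.1
    · intro a x y
      have h := H (a,0) ((0:A),x) (0,y)
      simp [qtMul, Prod.ext_iff] at h
      linear_combination (norm := abel) -h.1
    · intro x a y
      have h := H ((0:A),x) (a,0) (0,y)
      simp [qtMul, Prod.ext_iff] at h
      linear_combination (norm := abel) h.1
    · intro a b c
      have h := H (a,0) (b,0) (c,0)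
      simp [qtMul, Prod.ext_iff] at h
      linear_combination (norm := abel) -h.1
    · intro a b x
      have h := H (a,0) (b,0) ((0:A),x)
      simp [qtMul, Prod.ext_iff] at h
      linear_combination (norm := abel) h.2
    · intro x a b
      have h := H ((0:A),x) (a,0) (b,0)
      simp [qtMul, Prod.ext_iff] at h
      linear_combination (norm := abel) -h.2
    · intro a x b
      have h := H (a,0) ((0:A),x) (b,0)
      simp [qtMul, Prod.ext_iff] at h
      linear_combination (norm := abel) -h.2
    · intro a x y
      have h := H (a,0) ((0:A),x) (0,y)
      simp [qtMul, Prod.ext_iff] at h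
      linear_combination (norm := abel) -h.2
    · intro x y a
      have h := H ((0:A),x) (0,y) (a,0)
      simp [qtMul, Prod.ext_iff] at h
      linear_combination (norm := abel) h.2
    · intro x a y
      have h := H ((0:A),x) (a,0) (0,y)
      simp [qtMul, Prod.ext_iff] at h
      linear_combination (norm := abel) -h.2
    · intro x a b
      have h := H ((0:A),x) (a,0) (b,0)
      simp [qtMul, Prod.ext_iff] at h
      linear_combination (norm := abel) -h.1
    · intro a b x
      have h := H (a,0) (b,0) ((0:A),x)
      simp [qtMul, Prod.ext_iff] at h
      linear_combination (norm := abel) h.1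
    · intro a x b
      have h := H (a,0) ((0:A),x) (b,0)
      simp [qtMul, Prod.ext_iff] at h
      linear_combination (norm := abel) -h.1
    · intro a b c
      have h := H (a,0) (b,0) (c,0)
      simp [qtMul, Prod.ext_iff] at h
      linear_combination (norm := abel) -h.2
  · rintro ⟨C1, C2, C3, C4, C5, C6, C7, C8, C9, C10, C11, C12, C13, C14, C15⟩
    intro p q s
    obtain ⟨a, x⟩ := p; obtain ⟨b, y⟩ := q; obtain ⟨c, z⟩ := s
    simp only [qtMul, Prod.mk.injEq, map_add, LinearMap.add_apply]
    constructor
    · linear_combination (norm := abel) -C5 a b c - C14 a y c - C12 x b c + C13 a b z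
        - C3 a y z + C4 x b z + C2 x y c
    · linear_combination (norm := abel) C1 x y z - C9 a y z - C11 x b z + C6 a b z
        + C10 x y c - C8 a y c - C7 x b c - C15 a b c
end

section
/- If D: A→B is a strong deformation map in the quasi-twilled associative algebra A⊕B, then the bilinear multiplication on A defined by a·_D b := a·_A b + a↼D(b) + D(a)⇀b is associative. -/
variable {k A B : Type*} [Field k] [AddCommGroup A] [Module k A] [AddCommGroup B] [Module k B]

/-- The multiplication `a ·_D b := a·_A b + a↼D(b) + D(a)⇀b` on `A`
induced by a strong deformation map `D`. -/
def muD (μ : A →ₗ[k] A →ₗ[k] A) (hr : B →ₗ[k] A →ₗ[k] A) (hl : A →ₗ[k] B →ₗ[k] A)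
    (D : A →ₗ[k] B) (a b : A) : A :=
  μ a b + hl a (D b) + hr (D a) b

/-- if `D` is a strong deformation map, then `·_D` is associative. -/
theorem muD_assoc
    (μ : A →ₗ[k] A →ₗ[k] A) (ν : B →ₗ[k] B →ₗ[k] B)
    (tr : A →ₗ[k] B →ₗ[k] B) (tl : B →ₗ[k] A →ₗ[k] B)
    (hr : B →ₗ[k] A →ₗ[k] A) (hl : A →ₗ[k] B →ₗ[k] A)
    (θ : A →ₗ[k] A →ₗ[k] B)
    (hA : ∀ p q s : A × B,
        qtMul μ ν tr tl hr hl θ (qtMul μ ν tr tl hr hl θ p q) s =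
          qtMul μ ν tr tl hr hl θ p (qtMul μ ν tr tl hr hl θ q s))
    (D : A →ₗ[k] B)
    (hD : ∀ a b : A,
        D (μ a b + hl a (D b) + hr (D a) b) =
          ν (D a) (D b) + tr a (D b) + tl (D a) b + θ a b) :
    ∀ a b c : A, muD μ hr hl D (muD μ hr hl D a b) c = muD μ hr hl D a (muD μ hr hl D b c) := by
  intro a b c
  have key : ∀ x y : A, qtMul μ ν tr tl hr hl θ (x, D x) (y, D y) =
      (muD μ hr hl D x y, D (muD μ hr hl D x y)) := by
    intro x y
    simp only [qtMul, muD, hD]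
  have h := hA (a, D a) (b, D b) (c, D c)
  rw [key a b, key b c, key, key] at h
  exact congrArg Prod.fst h
end

section
/- If D: A→B is a strong deformation map in the quasi-twilled associative algebra A⊕B, then B is a bimodule over the associative algebra (A, ·_D) via a▷_D x := a▷x + D(a)·_B x − D(a↼x) and x◁_D a := x◁a + x·_B D(a) − D(x⇀a); that is, for all a,b ∈ A and x ∈ B one has (a·_D b)▷_D x = a▷_D(b▷_D x), x◁_D(a·_D b) = (x◁_D a)◁_D b, and (a▷_D x)◁_D b = a▷_D(x◁_D b), where a·_D b := a·_A b + a↼D(b) + D(a)⇀b. -/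
variable {k A B : Type*} [Field k] [AddCommGroup A] [Module k A] [AddCommGroup B] [Module k B]

/-- `a ▷_D x := a▷x + D(a)·_B x − D(a↼x)`. -/
def trD (ν : B →ₗ[k] B →ₗ[k] B) (tr : A →ₗ[k] B →ₗ[k] B) (hl : A →ₗ[k] B →ₗ[k] A)
    (D : A →ₗ[k] B) (a : A) (x : B) : B :=
  tr a x + ν (D a) x - D (hl a x)

/-- `x ◁_D a := x◁a + x·_B D(a) − D(x⇀a)`. -/
def tlD (ν : B →ₗ[k] B →ₗ[k] B) (tl : B →ₗ[k] A →ₗ[k] B) (hr : B →ₗ[k] A →ₗ[k] A)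
    (D : A →ₗ[k] B) (x : B) (a : A) : B :=
  tl x a + ν x (D a) - D (hr x a)

/-- The twisted multiplication on `A ⊕ B` transported along `(a,x) ↦ (a, D a + x)`. -/
def mulD (μ : A →ₗ[k] A →ₗ[k] A) (ν : B →ₗ[k] B →ₗ[k] B)
    (tr : A →ₗ[k] B →ₗ[k] B) (tl : B →ₗ[k] A →ₗ[k] B)
    (hr : B →ₗ[k] A →ₗ[k] A) (hl : A →ₗ[k] B →ₗ[k] A)
    (D : A →ₗ[k] B) (p q : A × B) : A × B :=
  (muD μ hr hl D p.1 q.1 + hl p.1 q.2 + hr p.2 q.1,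
   ν p.2 q.2 + trD ν tr hl D p.1 q.2 + tlD ν tl hr D p.2 q.1)

/-- if `D` is a strong deformation map, then `(B, ▷_D, ◁_D)` is a bimodule
over the associative algebra `(A, ·_D)`. -/
theorem strongDeformationMap_bimodule
    (μ : A →ₗ[k] A →ₗ[k] A) (ν : B →ₗ[k] B →ₗ[k] B)
    (tr : A →ₗ[k] B →ₗ[k] B) (tl : B →ₗ[k] A →ₗ[k] B)
    (hr : B →ₗ[k] A →ₗ[k] A) (hl : A →ₗ[k] B →ₗ[k] A)
    (θ : A →ₗ[k] A →ₗ[k] B)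
    (hA : ∀ p q s : A × B,
        qtMul μ ν tr tl hr hl θ (qtMul μ ν tr tl hr hl θ p q) s =
          qtMul μ ν tr tl hr hl θ p (qtMul μ ν tr tl hr hl θ q s))
    (D : A →ₗ[k] B)
    (hD : ∀ a b : A,
        D (μ a b + hl a (D b) + hr (D a) b) =
          ν (D a) (D b) + tr a (D b) + tl (D a) b + θ a b) :
    ∀ (a b : A) (x : B),
      trD ν tr hl D (muD μ hr hl D a b) x = trD ν tr hl D a (trD ν tr hl D b x) ∧
      tlD ν tl hr D x (muD μ hr hl D a b) = tlD ν tl hr D (tlD ν tl hr D x a) b ∧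
      tlD ν tl hr D (trD ν tr hl D a x) b = trD ν tr hl D a (tlD ν tl hr D x b) := by
  -- transport along ψ : (a,x) ↦ (a, D a + x)
  have hpsi : ∀ p q : A × B,
      ((mulD μ ν tr tl hr hl D p q).1, D (mulD μ ν tr tl hr hl D p q).1 +
        (mulD μ ν tr tl hr hl D p q).2) =
      qtMul μ ν tr tl hr hl θ (p.1, D p.1 + p.2) (q.1, D q.1 + q.2) := by
    intro p q
    have h := hD p.1 q.1
    simp only [mulD, qtMul, muD, trD, tlD, map_add, LinearMap.add_apply, Prod.mk.injEq]
    constructor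
    · abel
    · rw [show (D : A →ₗ[k] B) (μ p.1 q.1) + D (hl p.1 (D q.1)) + D (hr (D p.1) q.1) =
          D (μ p.1 q.1 + hl p.1 (D q.1) + hr (D p.1) q.1) by simp [map_add], h]
      abel
  have hinj : ∀ p q : A × B, (p.1, D p.1 + p.2) = (q.1, D q.1 + q.2) → p = q := by
    intro p q h
    injection h with h1 h2
    rw [h1] at h2
    exact Prod.ext h1 (add_left_cancel h2)
  have hassoc : ∀ p q s : A × B,
      mulD μ ν tr tl hr hl D (mulD μ ν tr tl hr hl D p q) s =
        mulD μ ν tr tl hr hl D p (mulD μ ν tr tl hr hl D q s) := by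
    intro p q s
    apply hinj
    rw [hpsi, hpsi, hpsi, hpsi, hA]
  intro a b x
  refine ⟨?_, ?_, ?_⟩
  · have h := congrArg Prod.snd (hassoc (a, 0) (b, 0) (0, x))
    simpa [mulD, muD, trD, tlD] using h
  · have h := congrArg Prod.snd (hassoc (0, x) (a, 0) (b, 0))
    simpa [mulD, muD, trD, tlD] using h.symm
  · have h := congrArg Prod.snd (hassoc (a, 0) (0, x) (b, 0))
    simpa [mulD, muD, trD, tlD] using h
end

section
/- If D: A→B is a strong deformation map in the quasi-twilled associative algebra A⊕B, then the multiplication on A⊕B defined by (a,x)⋈(b,y) = (a·_D b + a↼y + x⇀b, x·_B y + a▷_D y + x◁_D b) is associative, where a·_D b := a·_A b + a↼D(b) + D(a)⇀b, a▷_D x := a▷x + D(a)·_B x − D(a↼x), and x◁_D a := x◁a + x·_B D(a) − D(x⇀a). In other words, (A with ·_D, B with ·_B, ▷_D, ◁_D, ⇀, ↼) forms a matched pair of associative algebras. -/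
variable {k A B : Type*} [Field k] [AddCommGroup A] [Module k A] [AddCommGroup B] [Module k B]

/-- The matched-pair multiplication on `A ⊕ B` induced by a strong deformation map:
`(a,x) ⋈ (b,y) = (a·_D b + a↼y + x⇀b, x·_B y + a▷_D y + x◁_D b)`. -/
def mpMulD (μ : A →ₗ[k] A →ₗ[k] A) (ν : B →ₗ[k] B →ₗ[k] B)
    (tr : A →ₗ[k] B →ₗ[k] B) (tl : B →ₗ[k] A →ₗ[k] B)
    (hr : B →ₗ[k] A →ₗ[k] A) (hl : A →ₗ[k] B →ₗ[k] A)
    (D : A →ₗ[k] B) (p q : A × B) : A × B :=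
  (muD μ hr hl D p.1 q.1 + hl p.1 q.2 + hr p.2 q.1,
   ν p.2 q.2 + trD ν tr hl D p.1 q.2 + tlD ν tl hr D p.2 q.1)

/-- if `D` is a strong deformation map, then the matched-pair multiplication
`⋈` on `A ⊕ B` is associative, i.e. `(A, ·_D, B, ·_B, ▷_D, ◁_D, ⇀, ↼)` is a matched pair
of associative algebras. -/
theorem mpMulD_assoc
    (μ : A →ₗ[k] A →ₗ[k] A) (ν : B →ₗ[k] B →ₗ[k] B)
    (tr : A →ₗ[k] B →ₗ[k] B) (tl : B →ₗ[k] A →ₗ[k] B)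
    (hr : B →ₗ[k] A →ₗ[k] A) (hl : A →ₗ[k] B →ₗ[k] A)
    (θ : A →ₗ[k] A →ₗ[k] B)
    (hA : ∀ p q s : A × B,
        qtMul μ ν tr tl hr hl θ (qtMul μ ν tr tl hr hl θ p q) s =
          qtMul μ ν tr tl hr hl θ p (qtMul μ ν tr tl hr hl θ q s))
    (D : A →ₗ[k] B)
    (hD : ∀ a b : A,
        D (μ a b + hl a (D b) + hr (D a) b) =
          ν (D a) (D b) + tr a (D b) + tl (D a) b + θ a b) :
    ∀ p q s : A × B,
      mpMulD μ ν tr tl hr hl D (mpMulD μ ν tr tl hr hl D p q) s =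
        mpMulD μ ν tr tl hr hl D p (mpMulD μ ν tr tl hr hl D q s) := by
  set Φ : A × B → A × B := fun p => (p.1, p.2 + D p.1) with hΦ
  have hinj : Function.Injective Φ := by
    intro p q h
    simp only [hΦ, Prod.ext_iff] at h
    obtain ⟨h1, h2⟩ := h
    rw [h1] at h2
    exact Prod.ext h1 (add_right_cancel h2)
  have key : ∀ p q : A × B,
      Φ (mpMulD μ ν tr tl hr hl D p q) = qtMul μ ν tr tl hr hl θ (Φ p) (Φ q) := by
    intro p q
    have hD' := hD p.1 q.1
    simp only [hΦ, mpMulD, qtMul, muD, trD, tlD, Prod.mk.injEq, map_add, map_sub]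
    refine ⟨by simp only [map_add, LinearMap.add_apply]; abel, ?_⟩
    simp only [map_add] at hD' ⊢
    rw [hD']
    simp only [LinearMap.add_apply, LinearMap.map_add]
    abel
  intro p q s
  apply hinj
  rw [key, key, key, key, hA]
end

section
/- A linear map r: B→A is a weak deformation map if and only if the graph Gr(r) = {(r(x), x) : x ∈ B} ⊆ A⊕B is closed under the multiplication of the quasi-twilled associative algebra A⊕B. -/
variable {k A B : Type*} [Field k] [AddCommGroup A] [Module k A] [AddCommGroup B] [Module k B]

/-- `r : B → A` is a weak deformation map iff its graph
`Gr(r) = {(r x, x) : x ∈ B}` is closed under the multiplication of `A ⊕ B`. -/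
theorem weakDeformationMap_iff_graph_closed
    (μ : A →ₗ[k] A →ₗ[k] A) (ν : B →ₗ[k] B →ₗ[k] B)
    (tr : A →ₗ[k] B →ₗ[k] B) (tl : B →ₗ[k] A →ₗ[k] B)
    (hr : B →ₗ[k] A →ₗ[k] A) (hl : A →ₗ[k] B →ₗ[k] A)
    (θ : A →ₗ[k] A →ₗ[k] B)
    (hA : ∀ p q s : A × B,
        qtMul μ ν tr tl hr hl θ (qtMul μ ν tr tl hr hl θ p q) s =
          qtMul μ ν tr tl hr hl θ p (qtMul μ ν tr tl hr hl θ q s))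
    (r : B →ₗ[k] A) :
    (∀ x y : B,
        μ (r x) (r y) + hl (r x) y + hr x (r y) =
          r (ν x y + tr (r x) y + tl x (r y) + θ (r x) (r y))) ↔
    (∀ p q : A × B, p ∈ Set.range (fun x : B => ((r x, x) : A × B)) →
        q ∈ Set.range (fun x : B => ((r x, x) : A × B)) →
        qtMul μ ν tr tl hr hl θ p q ∈ Set.range (fun x : B => ((r x, x) : A × B))) := by
  constructor
  · rintro h _ _ ⟨x, rfl⟩ ⟨y, rfl⟩
    exact ⟨ν x y + tr (r x) y + tl x (r y) + θ (r x) (r y), by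
      simp [qtMul, h x y]⟩
  · intro h x y
    obtain ⟨z, hz⟩ := h (r x, x) (r y, y) ⟨x, rfl⟩ ⟨y, rfl⟩
    simp only [qtMul, Prod.ext_iff] at hz
    rw [← hz.2, hz.1]
end

section
/- If r: B→A is a weak deformation map in the quasi-twilled associative algebra A⊕B, then the bilinear multiplication on B defined by x·_r y := x·_B y + r(x)▷y + x◁r(y) + θ(r(x),r(y)) is associative. -/
variable {k A B : Type*} [Field k] [AddCommGroup A] [Module k A] [AddCommGroup B] [Module k B]

/-- `x ·_r y := x·_B y + r(x)▷y + x◁r(y) + θ(r(x),r(y))`. -/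
def nuR (ν : B →ₗ[k] B →ₗ[k] B) (tr : A →ₗ[k] B →ₗ[k] B) (tl : B →ₗ[k] A →ₗ[k] B)
    (θ : A →ₗ[k] A →ₗ[k] B) (r : B →ₗ[k] A) (x y : B) : B :=
  ν x y + tr (r x) y + tl x (r y) + θ (r x) (r y)

/-- if `r` is a weak deformation map, then `·_r` is associative on `B`. -/
theorem nuR_assoc
    (μ : A →ₗ[k] A →ₗ[k] A) (ν : B →ₗ[k] B →ₗ[k] B)
    (tr : A →ₗ[k] B →ₗ[k] B) (tl : B →ₗ[k] A →ₗ[k] B)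
    (hr : B →ₗ[k] A →ₗ[k] A) (hl : A →ₗ[k] B →ₗ[k] A)
    (θ : A →ₗ[k] A →ₗ[k] B)
    (hA : ∀ p q s : A × B,
        qtMul μ ν tr tl hr hl θ (qtMul μ ν tr tl hr hl θ p q) s =
          qtMul μ ν tr tl hr hl θ p (qtMul μ ν tr tl hr hl θ q s))
    (r : B →ₗ[k] A)
    (hr' : ∀ x y : B,
        μ (r x) (r y) + hl (r x) y + hr x (r y) =
          r (ν x y + tr (r x) y + tl x (r y) + θ (r x) (r y))) :
    ∀ x y z : B,
      nuR ν tr tl θ r (nuR ν tr tl θ r x y) z = nuR ν tr tl θ r x (nuR ν tr tl θ r y z) := by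
  have key : ∀ u v : B, qtMul μ ν tr tl hr hl θ (r u, u) (r v, v)
      = (r (nuR ν tr tl θ r u v), nuR ν tr tl θ r u v) := by
    intro u v
    simp only [qtMul, nuR]
    exact Prod.ext (hr' u v) rfl
  intro x y z
  have h := hA (r x, x) (r y, y) (r z, z)
  rw [key x y, key y z, key (nuR ν tr tl θ r x y) z, key x (nuR ν tr tl θ r y z)] at h
  exact congrArg Prod.snd h
end

section
/- If r: B→A is a weak deformation map in the quasi-twilled associative algebra A⊕B, then the new multiplication on A⊕B defined by (a,x)∘(b,y) = (a·_r b + a↼_r y + x⇀_r b, x·_r y + a▷_r y + x◁_r b + θ(a,b)) is associative, where a·_r b := a·_A b − r(θ(a,b)); x·_r y := x·_B y + r(x)▷y + x◁r(y) + θ(r(x),r(y)); a▷_r x := a▷x + θ(a,r(x)); x◁_r a := x◁a + θ(r(x),a); x⇀_r a := x⇀a + r(x)·_A a − r(x◁a) − r(θ(r(x),a)); and a↼_r x := a↼x + a·_A r(x) − r(a▷x) − r(θ(a,r(x))). In other words, the deformed data (A with ·_r, B with ·_r, ▷_r, ◁_r, ⇀_r, ↼_r, θ) is again a quasi-twilled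 associative algebra. -/
variable {k A B : Type*} [Field k] [AddCommGroup A] [Module k A] [AddCommGroup B] [Module k B]

/-- `a ·_r b := a·_A b − r(θ(a,b))`. -/
def muR (μ : A →ₗ[k] A →ₗ[k] A) (θ : A →ₗ[k] A →ₗ[k] B) (r : B →ₗ[k] A) (a b : A) : A :=
  μ a b - r (θ a b)

/-- `a ▷_r x := a▷x + θ(a,r(x))`. -/
def trR (tr : A →ₗ[k] B →ₗ[k] B) (θ : A →ₗ[k] A →ₗ[k] B) (r : B →ₗ[k] A)
    (a : A) (x : B) : B :=
  tr a x + θ a (r x)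

/-- `x ◁_r a := x◁a + θ(r(x),a)`. -/
def tlR (tl : B →ₗ[k] A →ₗ[k] B) (θ : A →ₗ[k] A →ₗ[k] B) (r : B →ₗ[k] A)
    (x : B) (a : A) : B :=
  tl x a + θ (r x) a

/-- `x ⇀_r a := x⇀a + r(x)·_A a − r(x◁a) − r(θ(r(x),a))`. -/
def hrR (μ : A →ₗ[k] A →ₗ[k] A) (tl : B →ₗ[k] A →ₗ[k] B) (hr : B →ₗ[k] A →ₗ[k] A)
    (θ : A →ₗ[k] A →ₗ[k] B) (r : B →ₗ[k] A) (x : B) (a : A) : A :=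
  hr x a + μ (r x) a - r (tl x a) - r (θ (r x) a)

/-- `a ↼_r x := a↼x + a·_A r(x) − r(a▷x) − r(θ(a,r(x)))`. -/
def hlR (μ : A →ₗ[k] A →ₗ[k] A) (tr : A →ₗ[k] B →ₗ[k] B) (hl : A →ₗ[k] B →ₗ[k] A)
    (θ : A →ₗ[k] A →ₗ[k] B) (r : B →ₗ[k] A) (a : A) (x : B) : A :=
  hl a x + μ a (r x) - r (tr a x) - r (θ a (r x))

/-- The deformed multiplication
`(a,x)∘(b,y) = (a·_r b + a↼_r y + x⇀_r b, x·_r y + a▷_r y + x◁_r b + θ(a,b))`. -/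
def qtMulR (μ : A →ₗ[k] A →ₗ[k] A) (ν : B →ₗ[k] B →ₗ[k] B)
    (tr : A →ₗ[k] B →ₗ[k] B) (tl : B →ₗ[k] A →ₗ[k] B)
    (hr : B →ₗ[k] A →ₗ[k] A) (hl : A →ₗ[k] B →ₗ[k] A)
    (θ : A →ₗ[k] A →ₗ[k] B) (r : B →ₗ[k] A) (p q : A × B) : A × B :=
  (muR μ θ r p.1 q.1 + hlR μ tr hl θ r p.1 q.2 + hrR μ tl hr θ r p.2 q.1,
   nuR ν tr tl θ r p.2 q.2 + trR tr θ r p.1 q.2 + tlR tl θ r p.2 q.1 + θ p.1 q.1)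

/-- if `r` is a weak deformation map, then the deformed multiplication `∘`
on `A ⊕ B` is associative, i.e. the deformed data is again a quasi-twilled
associative algebra. -/
theorem qtMulR_assoc
    (μ : A →ₗ[k] A →ₗ[k] A) (ν : B →ₗ[k] B →ₗ[k] B)
    (tr : A →ₗ[k] B →ₗ[k] B) (tl : B →ₗ[k] A →ₗ[k] B)
    (hr : B →ₗ[k] A →ₗ[k] A) (hl : A →ₗ[k] B →ₗ[k] A)
    (θ : A →ₗ[k] A →ₗ[k] B)
    (hA : ∀ p q s : A × B,
        qtMul μ ν tr tl hr hl θ (qtMul μ ν tr tl hr hl θ p q) s =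
          qtMul μ ν tr tl hr hl θ p (qtMul μ ν tr tl hr hl θ q s))
    (r : B →ₗ[k] A)
    (hr' : ∀ x y : B,
        μ (r x) (r y) + hl (r x) y + hr x (r y) =
          r (ν x y + tr (r x) y + tl x (r y) + θ (r x) (r y))) :
    ∀ p q s : A × B,
      qtMulR μ ν tr tl hr hl θ r (qtMulR μ ν tr tl hr hl θ r p q) s =
        qtMulR μ ν tr tl hr hl θ r p (qtMulR μ ν tr tl hr hl θ r q s) := by
  intro p q s
  have key : ∀ u v : A × B,
      (fun p : A × B => ((p.1 + r p.2, p.2) : A × B)) (qtMulR μ ν tr tl hr hl θ r u v) =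
        qtMul μ ν tr tl hr hl θ
          ((fun p : A × B => ((p.1 + r p.2, p.2) : A × B)) u)
          ((fun p : A × B => ((p.1 + r p.2, p.2) : A × B)) v) := by
    intro u v
    have h := hr' u.2 v.2
    simp only [map_add] at h
    refine Prod.ext ?_ ?_
    · simp only [qtMul, qtMulR, muR, nuR, trR, tlR, hrR, hlR, map_add, map_sub,
        LinearMap.add_apply, LinearMap.sub_apply]
      rw [← sub_eq_zero] at h ⊢
      rw [← neg_eq_zero] at h
      rw [← h]
      abel
    · simp only [qtMul, qtMulR, muR, nuR, trR, tlR, hrR, hlR, map_add, map_sub,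
        LinearMap.add_apply]
      abel
  have hinj : Function.Injective (fun p : A × B => ((p.1 + r p.2, p.2) : A × B)) := by
    intro u v huv
    simp only [Prod.mk.injEq] at huv
    obtain ⟨h1, h2⟩ := huv
    rw [h2] at h1
    exact Prod.ext (add_right_cancel h1) h2
  apply hinj
  rw [key, key, key, key, hA]
end

section
/- If r: B→A is a weak deformation map in the quasi-twilled associative algebra A⊕B, then A is a bimodule over the associative algebra (B, ·_r) via x⇀_r a := x⇀a + r(x)·_A a − r(x◁a) − r(θ(r(x),a)) and a↼_r x := a↼x + a·_A r(x) − r(a▷x) − r(θ(a,r(x))); that is, for all x,y ∈ B and a ∈ A one has (x·_r y)⇀_r a = x⇀_r(y⇀_r a), a↼_r(x·_r y) = (a↼_r x)↼_r y, and (x⇀_r a)↼_r y = x⇀_r(a↼_r y), where x·_r y := x·_B y + r(x)▷y + x◁r(y) + θ(r(x),r(y)). -/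
/-!
Twist the product of `A ⊕ B` by the linear automorphism `(a, x) ↦ (a + r x, x)`. The twisted
product is again associative; since `r` is a weak deformation map, `B` is a subalgebra of it with
product `·_r`, and the `A`-component of a product with a factor in `B` is `⇀_r` resp. `↼_r`,
whatever the `B`-component of the other factor. Taking `A`-components of the associativity law
on triples of type `(B, B, A)`, `(A, B, B)` and `(B, A, B)` gives the three bimodule identities.
-/

variable {k A B : Type*} [Field k] [AddCommGroup A] [Module k A] [AddCommGroup B] [Module k B]

section Twist

variable (μ : A →ₗ[k] A →ₗ[k] A) (ν : B →ₗ[k] B →ₗ[k] B)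
    (tr : A →ₗ[k] B →ₗ[k] B) (tl : B →ₗ[k] A →ₗ[k] B)
    (hr : B →ₗ[k] A →ₗ[k] A) (hl : A →ₗ[k] B →ₗ[k] A)
    (θ : A →ₗ[k] A →ₗ[k] B) (r : B →ₗ[k] A)

def graphShift (p : A × B) : A × B := (p.1 + r p.2, p.2)

lemma graphShift_neg_graphShift (p : A × B) : graphShift r (graphShift (-r) p) = p := by
  simp [graphShift]

def twistedMul (p q : A × B) : A × B :=
  graphShift (-r) (qtMul μ ν tr tl hr hl θ (graphShift r p) (graphShift r q))

lemma twistedMul_assoc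
    (hA : ∀ p q s : A × B,
        qtMul μ ν tr tl hr hl θ (qtMul μ ν tr tl hr hl θ p q) s =
          qtMul μ ν tr tl hr hl θ p (qtMul μ ν tr tl hr hl θ q s))
    (p q s : A × B) :
    twistedMul μ ν tr tl hr hl θ r (twistedMul μ ν tr tl hr hl θ r p q) s =
      twistedMul μ ν tr tl hr hl θ r p (twistedMul μ ν tr tl hr hl θ r q s) := by
  simp only [twistedMul, graphShift_neg_graphShift, hA]

variable {μ ν tr tl hr hl θ r}
variable (hwd : ∀ x y : B,
        μ (r x) (r y) + hl (r x) y + hr x (r y) =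
          r (ν x y + tr (r x) y + tl x (r y) + θ (r x) (r y)))
include hwd

lemma twistedMul_inr_inr (x y : B) :
    twistedMul μ ν tr tl hr hl θ r (0, x) (0, y) = (0, nuR ν tr tl θ r x y) := by
  simp only [twistedMul, graphShift, qtMul, nuR, zero_add, hwd, LinearMap.neg_apply, add_neg_cancel]

lemma fst_twistedMul_inr_left (x : B) (q : A × B) :
    (twistedMul μ ν tr tl hr hl θ r (0, x) q).1 = hrR μ tl hr θ r x q.1 := by
  have h := hwd x q.2
  simp only [twistedMul, graphShift, qtMul, hrR, zero_add, map_add, LinearMap.neg_apply]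
    at h ⊢
  linear_combination (norm := module) h

lemma fst_twistedMul_inr_right (p : A × B) (y : B) :
    (twistedMul μ ν tr tl hr hl θ r p (0, y)).1 = hlR μ tr hl θ r p.1 y := by
  have h := hwd p.2 y
  simp only [twistedMul, graphShift, qtMul, hlR, zero_add, map_add, LinearMap.add_apply,
    LinearMap.neg_apply] at h ⊢
  linear_combination (norm := module) h

end Twist

/-- if `r` is a weak deformation map, then `(A, ⇀_r, ↼_r)` is a bimodule
over the associative algebra `(B, ·_r)`. -/
theorem weakDeformationMap_bimodule
    (μ : A →ₗ[k] A →ₗ[k] A) (ν : B →ₗ[k] B →ₗ[k] B)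
    (tr : A →ₗ[k] B →ₗ[k] B) (tl : B →ₗ[k] A →ₗ[k] B)
    (hr : B →ₗ[k] A →ₗ[k] A) (hl : A →ₗ[k] B →ₗ[k] A)
    (θ : A →ₗ[k] A →ₗ[k] B)
    (hA : ∀ p q s : A × B,
        qtMul μ ν tr tl hr hl θ (qtMul μ ν tr tl hr hl θ p q) s =
          qtMul μ ν tr tl hr hl θ p (qtMul μ ν tr tl hr hl θ q s))
    (r : B →ₗ[k] A)
    (hr' : ∀ x y : B,
        μ (r x) (r y) + hl (r x) y + hr x (r y) =
          r (ν x y + tr (r x) y + tl x (r y) + θ (r x) (r y))) :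
    ∀ (x y : B) (a : A),
      hrR μ tl hr θ r (nuR ν tr tl θ r x y) a = hrR μ tl hr θ r x (hrR μ tl hr θ r y a) ∧
      hlR μ tr hl θ r a (nuR ν tr tl θ r x y) = hlR μ tr hl θ r (hlR μ tr hl θ r a x) y ∧
      hlR μ tr hl θ r (hrR μ tl hr θ r x a) y = hrR μ tl hr θ r x (hlR μ tr hl θ r a y) := by
  intro x y a
  have assoc := twistedMul_assoc μ ν tr tl hr hl θ r hA
  refine ⟨?_, ?_, ?_⟩
  · have h := congrArg Prod.fst (assoc (0, x) (0, y) (a, 0))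
    rwa [twistedMul_inr_inr hr', fst_twistedMul_inr_left hr', fst_twistedMul_inr_left hr',
      fst_twistedMul_inr_left hr'] at h
  · have h := congrArg Prod.fst (assoc (a, 0) (0, x) (0, y))
    rwa [twistedMul_inr_inr hr', fst_twistedMul_inr_right hr', fst_twistedMul_inr_right hr',
      fst_twistedMul_inr_right hr', eq_comm] at h
  · have h := congrArg Prod.fst (assoc (0, x) (a, 0) (0, y))
    rwa [fst_twistedMul_inr_left hr', fst_twistedMul_inr_right hr', fst_twistedMul_inr_left hr',
      fst_twistedMul_inr_right hr'] at h
end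

section
/- Let r: B→A be a weak deformation map in the quasi-twilled associative algebra A⊕B. For each n ≥ 0 define δ^r: Hom(B^⊗n, A) → Hom(B^⊗(n+1), A) by δ^r(f)(x_1,…,x_{n+1}) = x_1 ⇀_r f(x_2,…,x_{n+1}) + Σ_{i=1}^{n} (−1)^i f(x_1,…,x_{i−1}, x_i ·_r x_{i+1}, …, x_{n+1}) + (−1)^{n+1} f(x_1,…,x_n) ↼_r x_{n+1}, where x·_r y := x·_B y + r(x)▷y + x◁r(y) + θ(r(x),r(y)), x⇀_r a := x⇀a + r(x)·_A a − r(x◁a) − r(θ(r(x),a)), and a↼_r x := a↼x + a·_A r(x) − r(a▷x) − r(θ(a,r(x))). Then δ^r ∘ δ^r = 0. -/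
set_option linter.unusedSectionVars false
set_option maxHeartbeats 1000000


variable {k A B : Type*} [Field k] [AddCommGroup A] [Module k A] [AddCommGroup B] [Module k B]

/-- The Hochschild-type coboundary operator associated to a multiplication `mu` on `R`,
a left action `actL` and a right action `actR` of `R` on `M`. -/
def hochD {R M : Type*} [AddCommGroup M] (mu : R → R → R)
    (actL : R → M → M) (actR : M → R → M)
    (n : ℕ) (f : (Fin n → R) → M) : (Fin (n + 1) → R) → M :=
  fun a =>
    actL (a 0) (f fun i => a i.succ)
      + ∑ i : Fin n, ((-1 : ℤ) ^ ((i : ℕ) + 1)) •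
          f (fun j => if (j : ℕ) < (i : ℕ) then a j.castSucc
                      else if (j : ℕ) = (i : ℕ) then mu (a j.castSucc) (a j.succ)
                      else a j.succ)
      + ((-1 : ℤ) ^ (n + 1)) • actR (f fun i => a i.castSucc) (a (Fin.last n))

section HochAbstract

variable {VV WW : Type*} [AddCommGroup VV] [Zero WW]

def fextB (m : ℕ) (v : Fin m → WW) : ℕ → WW :=
  fun i => if h : i < m then v ⟨i, h⟩ else 0

variable {mu : WW → WW → WW} {actL : WW → VV → VV} {actR : VV → WW → VV}

def mgB (mu : WW → WW → WW) (j : ℕ) (a : ℕ → WW) : ℕ → WW :=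
  fun i => if i < j then a i else if i = j then mu (a i) (a (i + 1)) else a (i + 1)

def CFB (mu : WW → WW → WW) (actL : WW → VV → VV) (actR : VV → WW → VV)
    (m : ℕ) (G : (ℕ → WW) → VV) (j : ℕ) (a : ℕ → WW) : VV :=
  if j = 0 then actL (a 0) (G fun i => a (i + 1))
  else if j ≤ m then G (mgB mu (j - 1) a)
  else actR (G a) (a m)

def DepB (m : ℕ) (G : (ℕ → WW) → VV) : Prop :=
  ∀ a b : ℕ → WW, (∀ i, i < m → a i = b i) → G a = G b

def DDB (mu : WW → WW → WW) (actL : WW → VV → VV) (actR : VV → WW → VV)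
    (m : ℕ) (G : (ℕ → WW) → VV) : (ℕ → WW) → VV :=
  fun a => ∑ j ∈ Finset.range (m + 2), ((-1 : ℤ) ^ j) • CFB mu actL actR m G j a

lemma mgB_lt {j i : ℕ} (h : i < j) (a : ℕ → WW) : mgB mu j a i = a i := by
  simp [mgB, h]

lemma mgB_eq (j : ℕ) (a : ℕ → WW) : mgB mu j a j = mu (a j) (a (j + 1)) := by
  simp [mgB]

lemma mgB_gt {j i : ℕ} (h : j < i) (a : ℕ → WW) : mgB mu j a i = a (i + 1) := by
  simp [mgB, Nat.not_lt.mpr h.le, Nat.ne_of_gt h]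

lemma CFB_zero (m : ℕ) (G : (ℕ → WW) → VV) (a : ℕ → WW) :
    CFB mu actL actR m G 0 a = actL (a 0) (G fun i => a (i + 1)) := by
  simp [CFB]

lemma CFB_mid {m j : ℕ} (h : j < m) (G : (ℕ → WW) → VV) (a : ℕ → WW) :
    CFB mu actL actR m G (j + 1) a = G (mgB mu j a) := by
  rw [CFB, if_neg (by omega), if_pos (by omega)]
  simp

lemma CFB_last (m : ℕ) (G : (ℕ → WW) → VV) (a : ℕ → WW) :
    CFB mu actL actR m G (m + 1) a = actR (G a) (a m) := by
  rw [CFB, if_neg (by omega), if_neg (by omega)]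

/-- The simplicial coface commutation identity. -/
lemma CFB_comm
    (hassoc : ∀ x y z, mu (mu x y) z = mu x (mu y z))
    (hLL : ∀ x y u, actL (mu x y) u = actL x (actL y u))
    (hRR : ∀ u x y, actR u (mu x y) = actR (actR u x) y)
    (hLR : ∀ x u y, actR (actL x u) y = actL x (actR u y))
    {m : ℕ} {G : (ℕ → WW) → VV} (hG : DepB m G)
    {i j : ℕ} (hij : i ≤ j) (hj : j ≤ m + 1) (a : ℕ → WW) :
    CFB mu actL actR (m + 1) (CFB mu actL actR m G j) i a
      = CFB mu actL actR (m + 1) (CFB mu actL actR m G i) (j + 1) a := by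
  rcases Nat.eq_zero_or_eq_succ_pred i with hi0 | hi1
  · subst hi0
    rcases Nat.eq_zero_or_eq_succ_pred j with hj0 | hj1
    · -- Case VV : i = 0, j = 0
      subst hj0
      rw [CFB_zero, CFB_zero, CFB_mid (h := by omega), CFB_zero, mgB_eq, ← hLL]
      have ht : (fun i => mgB mu 0 a (i + 1)) = fun i => a (i + 1 + 1) :=
        funext fun t => mgB_gt (h := t.succ_pos) a
      rw [ht]
    · rcases eq_or_lt_of_le hj with hjm | hjm
      · -- Case C : i = 0, j = m+1
        subst hjm
        rw [CFB_zero, CFB_last, CFB_last, CFB_zero, hLR]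
      · -- Case WW : i = 0, 1 ≤ j ≤ m
        obtain ⟨j', rfl⟩ : ∃ j', j = j' + 1 := ⟨j - 1, by omega⟩
        rw [CFB_zero, CFB_mid (h := by omega), CFB_mid (h := by omega), CFB_zero,
          mgB_lt (h := by omega)]
        congr 2
        funext t
        rcases lt_trichotomy t j' with h | h | h
        · rw [mgB_lt (h := h), mgB_lt (h := by omega)]
        · subst h
          rw [mgB_eq, mgB_eq]
        · rw [mgB_gt (h := h), mgB_gt (h := by omega)]
  · obtain ⟨i', rfl⟩ : ∃ i', i = i' + 1 := ⟨i - 1, by omega⟩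
    rcases eq_or_lt_of_le hj with hjm | hjm
    · subst hjm
      rcases eq_or_lt_of_le hij with hii | hii
      · -- Case G : i = j = m+1
        have h1 : i' = m := by omega
        subst h1
        rw [CFB_mid (h := by omega), CFB_last, CFB_last, CFB_last, mgB_eq, hRR]
        have hGa : G (mgB mu i' a) = G a := hG _ _ fun t ht => mgB_lt (h := ht) a
        rw [hGa]
      · -- Case F : 1 ≤ i ≤ m, j = m+1
        rw [CFB_mid (h := by omega), CFB_last, CFB_last, CFB_mid (h := by omega),
          mgB_gt (h := by omega)]
    · obtain ⟨j', rfl⟩ : ∃ j', j = j' + 1 := ⟨j - 1, by omega⟩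
      rcases eq_or_lt_of_le hij with hii | hii
      · -- Case D : 1 ≤ i = j ≤ m
        have h1 : i' = j' := by omega
        subst h1
        rw [CFB_mid (h := by omega), CFB_mid (h := by omega), CFB_mid (h := by omega),
          CFB_mid (h := by omega)]
        congr 1
        funext t
        rcases lt_trichotomy t i' with h | h | h
        · rw [mgB_lt (h := h), mgB_lt (h := h), mgB_lt (h := h), mgB_lt (h := by omega)]
        · subst h
          simp only [mgB_eq, mgB_lt (h := Nat.lt_succ_self t),
            mgB_gt (h := Nat.lt_succ_self t)]
          rw [hassoc]
        · rw [mgB_gt (h := h), mgB_gt (h := h), mgB_gt (h := show i' < t + 1 by omega),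
            mgB_gt (h := show i' + 1 < t + 1 by omega)]
      · -- Case E : 1 ≤ i < j ≤ m
        have h1 : i' < j' := by omega
        rw [CFB_mid (h := by omega), CFB_mid (h := by omega), CFB_mid (h := by omega),
          CFB_mid (h := by omega)]
        congr 1
        funext t
        rcases lt_trichotomy t i' with h | h | h
        · rw [mgB_lt (h := by omega), mgB_lt (h := h), mgB_lt (h := h),
            mgB_lt (h := by omega)]
        · subst h
          rw [mgB_lt (h := h1), mgB_eq, mgB_eq, mgB_lt (h := by omega),
            mgB_lt (h := by omega)]
        · rcases lt_trichotomy t j' with h2 | h2 | h2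
          · rw [mgB_lt (h := h2), mgB_gt (h := h), mgB_gt (h := h),
              mgB_lt (h := by omega)]
          · subst h2
            rw [mgB_eq, mgB_gt (h := h), mgB_gt (h := by omega), mgB_gt (h := h),
              mgB_eq]
          · rw [mgB_gt (h := h2), mgB_gt (h := h), mgB_gt (h := by omega),
              mgB_gt (h := by omega)]


lemma DepB_CFB {m j : ℕ} (hj : j ≤ m + 1) {G : (ℕ → WW) → VV} (hG : DepB m G) :
    DepB (m + 1) (CFB mu actL actR m G j) := by
  intro a b hab
  rw [CFB, CFB]
  split_ifs with h1 h2
  · rw [hab 0 (by omega), hG _ _ fun i hi => hab (i + 1) (by omega)]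
  · refine hG _ _ fun i hi => ?_
    rw [mgB, mgB]
    split_ifs with k1 k2
    · exact hab i (by omega)
    · rw [hab i (by omega), hab (i + 1) (by omega)]
    · exact hab (i + 1) (by omega)
  · rw [hab m (by omega), hG _ _ fun i hi => hab i (by omega)]

lemma DepB_DDB {m : ℕ} {G : (ℕ → WW) → VV} (hG : DepB m G) :
    DepB (m + 1) (DDB mu actL actR m G) := by
  intro a b hab
  unfold DDB
  refine Finset.sum_congr rfl fun j hj => ?_
  rw [DepB_CFB (by have := Finset.mem_range.mp hj; omega : j ≤ m + 1) hG a b hab]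

lemma CFB_sum {ι : Type*}
    (hL1 : ∀ (x : WW) (u v : VV), actL x (u + v) = actL x u + actL x v)
    (hR1 : ∀ (u v : VV) (y : WW), actR (u + v) y = actR u y + actR v y)
    (m : ℕ) (i : ℕ) (s : Finset ι) (c : ι → ℤ) (H : ι → (ℕ → WW) → VV) (a : ℕ → WW) :
    CFB mu actL actR m (fun b => ∑ j ∈ s, c j • H j b) i a
      = ∑ j ∈ s, c j • CFB mu actL actR m (H j) i a := by
  simp only [CFB]
  split_ifs with h1 h2
  · let φ : VV →+ VV := AddMonoidHom.mk' (actL (a 0)) (hL1 (a 0))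
    show φ (∑ j ∈ s, c j • H j _) = ∑ j ∈ s, c j • φ (H j _)
    rw [map_sum]
    exact Finset.sum_congr rfl fun j _ => map_zsmul φ _ _
  · rfl
  · let φ : VV →+ VV := AddMonoidHom.mk' (fun u => actR u (a m)) (fun u v => hR1 u v (a m))
    show φ (∑ j ∈ s, c j • H j _) = ∑ j ∈ s, c j • φ (H j _)
    rw [map_sum]
    exact Finset.sum_congr rfl fun j _ => map_zsmul φ _ _


lemma hochD_eq_DDB {m : ℕ} {G : (ℕ → WW) → VV} (hG : DepB m G) (a : Fin (m + 1) → WW) :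
    hochD mu actL actR m (fun v => G (fextB m v)) a
      = DDB mu actL actR m G (fextB (m + 1) a) := by
  have h0 : ((-1 : ℤ) ^ (0 : ℕ)) • CFB mu actL actR m G 0 (fextB (m + 1) a)
      = actL (a 0) (G (fextB m fun i => a i.succ)) := by
    rw [pow_zero, one_smul, CFB_zero]
    have e0 : fextB (m + 1) a 0 = a 0 := by
      simp [fextB]
    have e1 : (fun i : ℕ => fextB (m + 1) a (i + 1)) = fextB m fun i => a i.succ := by
      funext t
      by_cases ht : t < m
      · rw [fextB, fextB, dif_pos ht, dif_pos (by omega : t + 1 < m + 1)]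
        rfl
      · rw [fextB, fextB, dif_neg ht, dif_neg (by omega)]
    rw [e0, e1]
  have hmid : ∀ i : Fin m,
      G (fextB m (fun j : Fin m => if (j : ℕ) < (i : ℕ) then a j.castSucc
          else if (j : ℕ) = (i : ℕ) then mu (a j.castSucc) (a j.succ) else a j.succ))
        = G (mgB mu (i : ℕ) (fextB (m + 1) a)) := by
    intro i
    have hi := i.isLt
    congr 1
    funext t
    simp only [fextB, mgB, Fin.val_mk, Fin.castSucc_mk, Fin.succ_mk]
    split_ifs <;> first | rfl | omega
  have hsum : (∑ i : Fin m, ((-1 : ℤ) ^ ((i : ℕ) + 1)) •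
        G (fextB m (fun j : Fin m => if (j : ℕ) < (i : ℕ) then a j.castSucc
          else if (j : ℕ) = (i : ℕ) then mu (a j.castSucc) (a j.succ) else a j.succ)))
      = ∑ x ∈ Finset.range m,
          ((-1 : ℤ) ^ (x + 1)) • CFB mu actL actR m G (x + 1) (fextB (m + 1) a) := by
    rw [← Fin.sum_univ_eq_sum_range
      (fun x => ((-1 : ℤ) ^ (x + 1)) • CFB mu actL actR m G (x + 1) (fextB (m + 1) a)) m]
    refine Finset.sum_congr rfl fun i _ => ?_
    rw [CFB_mid (h := i.isLt), hmid i]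
  have hlast : ((-1 : ℤ) ^ (m + 1)) • CFB mu actL actR m G (m + 1) (fextB (m + 1) a)
      = ((-1 : ℤ) ^ (m + 1)) • actR (G (fextB m fun i => a i.castSucc)) (a (Fin.last m)) := by
    rw [CFB_last]
    have e2 : G (fextB (m + 1) a) = G (fextB m fun i => a i.castSucc) := by
      refine hG _ _ fun t ht => ?_
      rw [fextB, fextB, dif_pos (by omega : t < m + 1), dif_pos ht]
      rfl
    have e3 : fextB (m + 1) a m = a (Fin.last m) := by
      rw [fextB, dif_pos (by omega : m < m + 1)]
      rfl
    rw [e2, e3]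
  unfold hochD DDB
  rw [Finset.sum_range_succ, Finset.sum_range_succ', h0, hlast, ← hsum]
  abel


lemma DDB_DDB
    (hL1 : ∀ (x : WW) (u v : VV), actL x (u + v) = actL x u + actL x v)
    (hR1 : ∀ (u v : VV) (y : WW), actR (u + v) y = actR u y + actR v y)
    (hassoc : ∀ x y z, mu (mu x y) z = mu x (mu y z))
    (hLL : ∀ x y u, actL (mu x y) u = actL x (actL y u))
    (hRR : ∀ u x y, actR u (mu x y) = actR (actR u x) y)
    (hLR : ∀ x u y, actR (actL x u) y = actL x (actR u y))
    {m : ℕ} {G : (ℕ → WW) → VV} (hG : DepB m G) (a : ℕ → WW) :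
    DDB mu actL actR (m + 1) (DDB mu actL actR m G) a = 0 := by
  have hstep : ∀ i : ℕ,
      CFB mu actL actR (m + 1) (DDB mu actL actR m G) i a
        = ∑ j ∈ Finset.range (m + 2),
            ((-1 : ℤ) ^ j) • CFB mu actL actR (m + 1) (CFB mu actL actR m G j) i a :=
    fun i => CFB_sum hL1 hR1 (m + 1) i _ _ _ a
  show (∑ i ∈ Finset.range (m + 3),
      ((-1 : ℤ) ^ i) • CFB mu actL actR (m + 1) (DDB mu actL actR m G) i a) = 0
  have hss : ∀ i : ℕ, ((-1 : ℤ) ^ i) • CFB mu actL actR (m + 1) (DDB mu actL actR m G) i a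
      = ∑ j ∈ Finset.range (m + 2),
          ((-1 : ℤ) ^ (i + j)) • CFB mu actL actR (m + 1) (CFB mu actL actR m G j) i a := by
    intro i
    rw [hstep i, Finset.smul_sum]
    exact Finset.sum_congr rfl fun j _ => by rw [smul_smul, ← pow_add]
  calc (∑ i ∈ Finset.range (m + 3),
        ((-1 : ℤ) ^ i) • CFB mu actL actR (m + 1) (DDB mu actL actR m G) i a)
      = ∑ i ∈ Finset.range (m + 3), ∑ j ∈ Finset.range (m + 2),
          ((-1 : ℤ) ^ (i + j)) • CFB mu actL actR (m + 1) (CFB mu actL actR m G j) i a :=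
        Finset.sum_congr rfl fun i _ => hss i
    _ = ∑ p ∈ Finset.range (m + 3) ×ˢ Finset.range (m + 2),
          ((-1 : ℤ) ^ (p.1 + p.2)) • CFB mu actL actR (m + 1) (CFB mu actL actR m G p.2) p.1 a :=
        (Finset.sum_product' (Finset.range (m + 3)) (Finset.range (m + 2))
          (fun i j => ((-1 : ℤ) ^ (i + j)) •
            CFB mu actL actR (m + 1) (CFB mu actL actR m G j) i a)).symm
    _ = 0 := by
        refine Finset.sum_involution
          (fun p _ => if p.1 ≤ p.2 then (p.2 + 1, p.1) else (p.2, p.1 - 1)) ?_ ?_ ?_ ?_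
        · intro p hp
          simp only [Finset.mem_product, Finset.mem_range] at hp
          by_cases hle : p.1 ≤ p.2
          · rw [if_pos hle]
            have hcomm := CFB_comm hassoc hLL hRR hLR hG (i := p.1) (j := p.2) hle
              (by omega) a
            dsimp only
            rw [← hcomm, show p.2 + 1 + p.1 = (p.1 + p.2) + 1 by omega, pow_succ,
              mul_neg_one, neg_smul, add_neg_cancel]
          · rw [if_neg hle]
            have hcomm := CFB_comm hassoc hLL hRR hLR hG (i := p.2) (j := p.1 - 1)
              (by omega) (by omega) a
            dsimp only
            rw [show p.1 - 1 + 1 = p.1 by omega] at hcomm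
            rw [hcomm, show p.1 + p.2 = (p.2 + (p.1 - 1)) + 1 by omega, pow_succ,
              mul_neg_one, neg_smul, neg_add_cancel]
        · intro p hp hne
          by_cases hle : p.1 ≤ p.2 <;> simp [hle, Prod.ext_iff] <;> omega
        · intro p hp
          simp only [Finset.mem_product, Finset.mem_range] at hp ⊢
          by_cases hle : p.1 ≤ p.2 <;> simp [hle] <;> omega
        · intro p hp
          by_cases hle : p.1 ≤ p.2
          · simp only [if_pos hle]
            rw [if_neg (by omega)]
            simp
          · simp only [if_neg hle]
            simp only [Finset.mem_product, Finset.mem_range] at hp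
            rw [if_pos (by omega)]
            refine Prod.ext ?_ ?_ <;> simp <;> omega

theorem hoch_square_abstract
    (hL1 : ∀ (x : WW) (u v : VV), actL x (u + v) = actL x u + actL x v)
    (hR1 : ∀ (u v : VV) (y : WW), actR (u + v) y = actR u y + actR v y)
    (hassoc : ∀ x y z, mu (mu x y) z = mu x (mu y z))
    (hLL : ∀ x y u, actL (mu x y) u = actL x (actL y u))
    (hRR : ∀ u x y, actR u (mu x y) = actR (actR u x) y)
    (hLR : ∀ x u y, actR (actL x u) y = actL x (actR u y))
    (n : ℕ) (f : (Fin n → WW) → VV) :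
    hochD mu actL actR (n + 1) (hochD mu actL actR n f) = 0 := by
  set G : (ℕ → WW) → VV := fun b => f (fun i : Fin n => b i) with hGdef
  have hG : DepB n G := by
    intro u v huv
    simp only [hGdef]
    congr 1
    funext i
    exact huv i i.isLt
  have hf : (fun v : Fin n → WW => G (fextB n v)) = f := by
    funext v
    simp only [hGdef]
    congr 1
    funext i
    simp [fextB, i.isLt]
  have h1 : hochD mu actL actR n f = fun v => DDB mu actL actR n G (fextB (n + 1) v) := by
    funext v
    rw [← hf]
    exact hochD_eq_DDB hG v
  have hG2 : DepB (n + 1) (DDB mu actL actR n G) := DepB_DDB hG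
  funext a
  calc hochD mu actL actR (n + 1) (hochD mu actL actR n f) a
      = hochD mu actL actR (n + 1)
          (fun v => DDB mu actL actR n G (fextB (n + 1) v)) a := by rw [h1]
    _ = DDB mu actL actR (n + 1) (DDB mu actL actR n G) (fextB (n + 2) a) :=
        hochD_eq_DDB hG2 a
    _ = 0 := DDB_DDB hL1 hR1 hassoc hLL hRR hLR hG _
  -- done

end HochAbstract

section Inst

variable (μ : A →ₗ[k] A →ₗ[k] A) (ν : B →ₗ[k] B →ₗ[k] B)
    (tr : A →ₗ[k] B →ₗ[k] B) (tl : B →ₗ[k] A →ₗ[k] B)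
    (hr : B →ₗ[k] A →ₗ[k] A) (hl : A →ₗ[k] B →ₗ[k] A)
    (θ : A →ₗ[k] A →ₗ[k] B) (r : B →ₗ[k] A)

/-- The graph of a weak deformation map is multiplicative. -/
lemma qt_graph_mul
    (hr' : ∀ x y : B,
        μ (r x) (r y) + hl (r x) y + hr x (r y) =
          r (ν x y + tr (r x) y + tl x (r y) + θ (r x) (r y))) (x y : B) :
    qtMul μ ν tr tl hr hl θ (r x, x) (r y, y)
      = (r (nuR ν tr tl θ r x y), nuR ν tr tl θ r x y) := by
  refine Prod.ext ?_ ?_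
  · simpa [qtMul, nuR] using hr' x y
  · simp [qtMul, nuR]

lemma qt_piL
    (hr' : ∀ x y : B,
        μ (r x) (r y) + hl (r x) y + hr x (r y) =
          r (ν x y + tr (r x) y + tl x (r y) + θ (r x) (r y))) (x : B) (p : A × B) :
    (qtMul μ ν tr tl hr hl θ (r x, x) p).1 - r (qtMul μ ν tr tl hr hl θ (r x, x) p).2
      = hrR μ tl hr θ r x (p.1 - r p.2) := by
  obtain ⟨b, z⟩ := p
  have h := sub_eq_zero.mpr (hr' x z)
  simp only [map_add] at h
  simp only [qtMul, hrR, map_add, map_sub]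
  rw [← sub_eq_zero, ← h]
  abel

lemma qt_piR
    (hr' : ∀ x y : B,
        μ (r x) (r y) + hl (r x) y + hr x (r y) =
          r (ν x y + tr (r x) y + tl x (r y) + θ (r x) (r y))) (x : B) (p : A × B) :
    (qtMul μ ν tr tl hr hl θ p (r x, x)).1 - r (qtMul μ ν tr tl hr hl θ p (r x, x)).2
      = hlR μ tr hl θ r (p.1 - r p.2) x := by
  obtain ⟨b, z⟩ := p
  have h := sub_eq_zero.mpr (hr' z x)
  simp only [map_add] at h
  simp only [qtMul, hlR, map_add, map_sub, LinearMap.sub_apply, LinearMap.add_apply]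
  rw [← sub_eq_zero, ← h]
  abel

end Inst

/-- for a weak deformation map `r`, the coboundary operator `δ^r`
built from `·_r`, `⇀_r`, `↼_r` squares to zero on multilinear cochains. -/
theorem deltaR_squared_zero
    (μ : A →ₗ[k] A →ₗ[k] A) (ν : B →ₗ[k] B →ₗ[k] B)
    (tr : A →ₗ[k] B →ₗ[k] B) (tl : B →ₗ[k] A →ₗ[k] B)
    (hr : B →ₗ[k] A →ₗ[k] A) (hl : A →ₗ[k] B →ₗ[k] A)
    (θ : A →ₗ[k] A →ₗ[k] B)
    (hA : ∀ p q s : A × B,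
        qtMul μ ν tr tl hr hl θ (qtMul μ ν tr tl hr hl θ p q) s =
          qtMul μ ν tr tl hr hl θ p (qtMul μ ν tr tl hr hl θ q s))
    (r : B →ₗ[k] A)
    (hr' : ∀ x y : B,
        μ (r x) (r y) + hl (r x) y + hr x (r y) =
          r (ν x y + tr (r x) y + tl x (r y) + θ (r x) (r y))) :
    ∀ (n : ℕ) (f : MultilinearMap k (fun _ : Fin n => B) A),
      hochD (nuR ν tr tl θ r) (hrR μ tl hr θ r) (hlR μ tr hl θ r) (n + 1)
        (hochD (nuR ν tr tl θ r) (hrR μ tl hr θ r) (hlR μ tr hl θ r) n (fun v => f v)) = 0 := by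
  intro n f
  set m' := qtMul μ ν tr tl hr hl θ with hm'
  set nu := nuR ν tr tl θ r with hnu
  set aL := hrR μ tl hr θ r with haL
  set aR := hlR μ tr hl θ r with haR
  set ee : B → A × B := fun x => (r x, x) with hee
  set pp : A × B → A := fun p => p.1 - r p.2 with hpp
  have he : ∀ x y, m' (ee x) (ee y) = ee (nu x y) := fun x y =>
    qt_graph_mul μ ν tr tl hr hl θ r hr' x y
  have hpL : ∀ x p, pp (m' (ee x) p) = aL x (pp p) := fun x p =>
    qt_piL μ ν tr tl hr hl θ r hr' x p
  have hpR : ∀ x p, pp (m' p (ee x)) = aR (pp p) x := fun x p =>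
    qt_piR μ ν tr tl hr hl θ r hr' x p
  have hp0 : ∀ u : A, pp (u, (0 : B)) = u := by
    intro u
    simp [hpp]
  have hL1 : ∀ (x : B) (u v : A), aL x (u + v) = aL x u + aL x v := by
    intro x u v
    simp only [haL, hrR, map_add]
    abel
  have hR1 : ∀ (u v : A) (y : B), aR (u + v) y = aR u y + aR v y := by
    intro u v y
    simp only [haR, hlR, map_add, LinearMap.add_apply]
    abel
  have hassoc : ∀ x y z, nu (nu x y) z = nu x (nu y z) := by
    intro x y z
    have h2 := hA (ee x) (ee y) (ee z)
    rw [he x y, he y z, he (nu x y) z, he x (nu y z)] at h2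
    exact congrArg Prod.snd h2
  have hLL : ∀ (x y : B) (u : A), aL (nu x y) u = aL x (aL y u) := by
    intro x y u
    calc aL (nu x y) u = aL (nu x y) (pp (u, 0)) := by rw [hp0]
      _ = pp (m' (ee (nu x y)) (u, 0)) := (hpL _ _).symm
      _ = pp (m' (m' (ee x) (ee y)) (u, 0)) := by rw [he]
      _ = pp (m' (ee x) (m' (ee y) (u, 0))) := by rw [hA]
      _ = aL x (pp (m' (ee y) (u, 0))) := hpL _ _
      _ = aL x (aL y (pp (u, 0))) := by rw [hpL]
      _ = aL x (aL y u) := by rw [hp0]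
  have hRR : ∀ (u : A) (x y : B), aR u (nu x y) = aR (aR u x) y := by
    intro u x y
    calc aR u (nu x y) = aR (pp (u, 0)) (nu x y) := by rw [hp0]
      _ = pp (m' (u, 0) (ee (nu x y))) := (hpR _ _).symm
      _ = pp (m' (u, 0) (m' (ee x) (ee y))) := by rw [he]
      _ = pp (m' (m' (u, 0) (ee x)) (ee y)) := by rw [hA]
      _ = aR (pp (m' (u, 0) (ee x))) y := hpR _ _
      _ = aR (aR (pp (u, 0)) x) y := by rw [hpR]
      _ = aR (aR u x) y := by rw [hp0]
  have hLR : ∀ (x : B) (u : A) (y : B), aR (aL x u) y = aL x (aR u y) := by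
    intro x u y
    calc aR (aL x u) y = aR (aL x (pp (u, 0))) y := by rw [hp0]
      _ = aR (pp (m' (ee x) (u, 0))) y := by rw [hpL]
      _ = pp (m' (m' (ee x) (u, 0)) (ee y)) := (hpR _ _).symm
      _ = pp (m' (ee x) (m' (u, 0) (ee y))) := by rw [hA]
      _ = aL x (pp (m' (u, 0) (ee y))) := hpL _ _
      _ = aL x (aR (pp (u, 0)) y) := by rw [hpR]
      _ = aL x (aR u y) := by rw [hp0]
  exact hoch_square_abstract hL1 hR1 hassoc hLL hRR hLR n (fun v => f v)
end

section
/- Let r: B→A be a bijective linear map with inverse r^{-1}: A→B. Then r is a weak deformation map in the quasi-twilled associative algebra A⊕B if and only if r^{-1} is a strong deformation map in A⊕B. -/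
variable {k A B : Type*} [Field k] [AddCommGroup A] [Module k A] [AddCommGroup B] [Module k B]

/-- a bijective linear map `r : B → A` (with inverse `s = r⁻¹`) is a weak
deformation map iff its inverse is a strong deformation map. -/
theorem weak_iff_inverse_strong
    (μ : A →ₗ[k] A →ₗ[k] A) (ν : B →ₗ[k] B →ₗ[k] B)
    (tr : A →ₗ[k] B →ₗ[k] B) (tl : B →ₗ[k] A →ₗ[k] B)
    (hr : B →ₗ[k] A →ₗ[k] A) (hl : A →ₗ[k] B →ₗ[k] A)
    (θ : A →ₗ[k] A →ₗ[k] B)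
    (hA : ∀ p q s : A × B,
        qtMul μ ν tr tl hr hl θ (qtMul μ ν tr tl hr hl θ p q) s =
          qtMul μ ν tr tl hr hl θ p (qtMul μ ν tr tl hr hl θ q s))
    (r : B →ₗ[k] A) (s : A →ₗ[k] B)
    (hrs : ∀ a : A, r (s a) = a) (hsr : ∀ x : B, s (r x) = x) :
    (∀ x y : B,
        μ (r x) (r y) + hl (r x) y + hr x (r y) =
          r (ν x y + tr (r x) y + tl x (r y) + θ (r x) (r y))) ↔
    (∀ a b : A,
        s (μ a b + hl a (s b) + hr (s a) b) =
          ν (s a) (s b) + tr a (s b) + tl (s a) b + θ a b) := by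
  constructor
  · intro h a b
    have := h (s a) (s b)
    rw [hrs, hrs] at this
    rw [this, hsr]
  · intro h x y
    have := h (r x) (r y)
    rw [hsr, hsr] at this
    have := congrArg r this
    rw [hrs] at this
    rw [← this]
end
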